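/- Let (G, ℓ) be a small morphism-colored groupoid satisfying the inverse-color condition, C a category, and F : G ⥤ C a functor that is color-constant with respect to ℓ. Then for all morphisms f, g of G with ℓ(f) ∼¹ ℓ(g), one has F(f) = F(g) as elements of (Σ X Y : C, X ⟶ Y). -/
import Mathlib


open CategoryTheory

universe v u

/-- The type of morphisms of a category, bundled with their endpoints. -/
abbrev Mor (C : Type u) [Category.{v} C] : Type (max u v) := Σ X Y : C, X ⟶ Y

/-- `(C, ℓ)` is a morphism-colored category: whenever `ℓ g = ℓ (f₂ ≫ f₁)`,
the morphism `g` factors as `g₂ ≫ g₁` with matching colors. -/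
def IsMCColoring {C : Type u} [Category.{v} C] {I : Type*} (ℓ : Mor C → I) : Prop :=
  ∀ {A B X Y Z : C} (g : A ⟶ B) (f₂ : X ⟶ Y) (f₁ : Y ⟶ Z),
    ℓ ⟨A, B, g⟩ = ℓ ⟨X, Z, f₂ ≫ f₁⟩ →
    ∃ (M : C) (g₂ : A ⟶ M) (g₁ : M ⟶ B),
      g = g₂ ≫ g₁ ∧ ℓ ⟨A, M, g₂⟩ = ℓ ⟨X, Y, f₂⟩ ∧ ℓ ⟨M, B, g₁⟩ = ℓ ⟨Y, Z, f₁⟩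

/-- The inverse-color condition on a morphism-colored groupoid. -/
def InvColorCond {G : Type u} [Groupoid.{v} G] {I : Type*} (ℓ : Mor G → I) : Prop :=
  ∀ {X Y X' Y' : G} (f : X ⟶ Y) (g : X' ⟶ Y'),
    ℓ ⟨X, Y, f⟩ = ℓ ⟨X', Y', g⟩ →
    ℓ ⟨Y, X, Groupoid.inv f⟩ = ℓ ⟨Y', X', Groupoid.inv g⟩

/-- A nonempty composable sequence of morphisms from `X` to `Y`. -/
inductive Chain (C : Type u) [Category.{v} C] : C → C → Type (max u v) where
  | single {X Y : C} (f : X ⟶ Y) : Chain C X Y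
  | cons {X Y Z : C} (f : X ⟶ Y) (rest : Chain C Y Z) : Chain C X Z

/-- The composite of a composable sequence of morphisms. -/
def Chain.comp {C : Type u} [Category.{v} C] : ∀ {X Y : C}, Chain C X Y → (X ⟶ Y)
  | _, _, .single f => f
  | _, _, .cons f rest => f ≫ rest.comp

/-- The list of colors of a composable sequence of morphisms. -/
def Chain.colors {C : Type u} [Category.{v} C] {I : Type*} (ℓ : Mor C → I) :
    ∀ {X Y : C}, Chain C X Y → List I
  | _, _, .single f => [ℓ ⟨_, _, f⟩]
  | _, _, .cons f rest => ℓ ⟨_, _, f⟩ :: rest.colors ℓ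

/-- The relation `∼¹` on colors: `a ∼¹ b` iff there are composable sequences
of morphisms, of the same length and with componentwise equal colors,
whose composites have colors `a` and `b` respectively. -/
def Sim1 {C : Type u} [Category.{v} C] {I : Type*} (ℓ : Mor C → I) (a b : I) : Prop :=
  ∃ (X Y X' Y' : C) (c : Chain C X Y) (c' : Chain C X' Y'),
    c.colors ℓ = c'.colors ℓ ∧ a = ℓ ⟨X, Y, c.comp⟩ ∧ b = ℓ ⟨X', Y', c'.comp⟩

/-- The color of the identity of an object. -/
def ell0 {C : Type u} [Category.{v} C] {I : Type*} (ℓ : Mor C → I) (x : C) : I :=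
  ℓ ⟨x, x, 𝟙 x⟩

/-- The relation `∼⁰` on identity colors. -/
def Sim0 {C : Type u} [Category.{v} C] {I : Type*} (ℓ : Mor C → I) (a b : I) : Prop :=
  ∃ (X Y X' Y' : C) (f : X ⟶ Y) (g : X' ⟶ Y'),
    Sim1 ℓ (ℓ ⟨X, Y, f⟩) (ℓ ⟨X', Y', g⟩) ∧ a = ell0 ℓ X ∧ b = ell0 ℓ X'

/-- A functor is color-constant if it sends morphisms of equal color to equal morphisms. -/
def ColorConstant {C : Type u} [Category.{v} C] {D : Type*} [Category D] {I : Type*}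
    (ℓ : Mor C → I) (F : C ⥤ D) : Prop :=
  ∀ {X Y X' Y' : C} (f : X ⟶ Y) (g : X' ⟶ Y'),
    ℓ ⟨X, Y, f⟩ = ℓ ⟨X', Y', g⟩ →
    (⟨F.obj X, F.obj Y, F.map f⟩ : Mor D) = ⟨F.obj X', F.obj Y', F.map g⟩


/-- Composition lemma for bundled morphism equalities. -/
theorem Mor.comp_congr {D : Type*} [Category D] {A B C A' B' C' : D}
    {u : A ⟶ B} {v : B ⟶ C} {u' : A' ⟶ B'} {v' : B' ⟶ C'}
    (hu : (⟨A, B, u⟩ : Mor D) = ⟨A', B', u'⟩)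
    (hv : (⟨B, C, v⟩ : Mor D) = ⟨B', C', v'⟩) :
    (⟨A, C, u ≫ v⟩ : Mor D) = ⟨A', C', u' ≫ v'⟩ := by
  obtain ⟨rfl, h1⟩ := Sigma.mk.inj_iff.mp hu
  obtain ⟨rfl, h2⟩ := Sigma.mk.inj_iff.mp (eq_of_heq h1)
  cases eq_of_heq h2
  obtain ⟨-, h3⟩ := Sigma.mk.inj_iff.mp hv
  obtain ⟨rfl, h4⟩ := Sigma.mk.inj_iff.mp (eq_of_heq h3)
  rw [eq_of_heq h4]

theorem Chain.colors_ne_nil {G : Type u} [Category.{v} G] {I : Type*} (ℓ : Mor G → I)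
    {X Y : G} (c : Chain G X Y) : c.colors ℓ ≠ [] := by
  cases c <;> simp [Chain.colors]

theorem chain_key {G : Type u} [Category.{v} G] {I : Type*} (ℓ : Mor G → I)
    {D : Type*} [Category D] (F : G ⥤ D) (hF : ColorConstant ℓ F) :
    ∀ {X Y X' Y' : G} (c : Chain G X Y) (c' : Chain G X' Y'),
      c.colors ℓ = c'.colors ℓ →
      (⟨F.obj X, F.obj Y, F.map c.comp⟩ : Mor D) = ⟨F.obj X', F.obj Y', F.map c'.comp⟩ := by
  intro X Y X' Y' c c' hc
  induction c generalizing X' Y' c' with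
  | single u =>
    cases c' with
    | single u' =>
      simp only [Chain.colors, List.cons.injEq] at hc
      exact hF u u' hc.1
    | cons u' rest' =>
      simp only [Chain.colors, List.cons.injEq] at hc
      exact absurd hc.2.symm (rest'.colors_ne_nil ℓ)
  | cons u rest ih =>
    cases c' with
    | single u' =>
      simp only [Chain.colors, List.cons.injEq] at hc
      exact absurd hc.2 (rest.colors_ne_nil ℓ)
    | cons u' rest' =>
      simp only [Chain.colors, List.cons.injEq] at hc
      simp only [Chain.comp, F.map_comp]
      exact Mor.comp_congr (hF u u' hc.1) (ih rest' hc.2)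

/-- A color-constant functor takes equal values on morphisms
with `∼¹`-equivalent colors. -/
theorem stmt11 {G : Type u} [Groupoid.{v} G] {I : Type*} (ℓ : Mor G → I)
    (hℓ : IsMCColoring ℓ) (hinv : InvColorCond ℓ)
    {D : Type*} [Category D] (F : G ⥤ D) (hF : ColorConstant ℓ F)
    {X Y X' Y' : G} (f : X ⟶ Y) (g : X' ⟶ Y')
    (h : Sim1 ℓ (ℓ ⟨X, Y, f⟩) (ℓ ⟨X', Y', g⟩)) :
    (⟨F.obj X, F.obj Y, F.map f⟩ : Mor D) = ⟨F.obj X', F.obj Y', F.map g⟩ := by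
  obtain ⟨A, B, A', B', c, c', hc, hf, hg⟩ := h
  exact (hF f c.comp hf).trans ((chain_key ℓ F hF c c' hc).trans (hF c'.comp g hg.symm))
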